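/- Under the hypotheses that F = |F|^{1/2} Q |F|^{1/2} with Q a contraction satisfying |(Qg,g)| ≥ μ‖g‖², and ‖φ‖² = c for fixed c > 0, there exist constants c₁, c₂ > 0 such that c₁ |(|F|^{1/2}φ,φ)|² ≤ |(Fφ,φ)| ≤ c₂ (|F|^{1/2}φ,φ), namely c₁ = μ/c and c₂ = ‖|F|^{1/2}‖. -/

import Mathlib

local notation "⟪" x ", " y "⟫" => @inner ℂ _ _ x y

/-! In the eigenbasis `ψ` the operators `F`, `S = |F|^{1/2}` and `Q` are diagonal, so `F = S Q S`
with `S` self-adjoint, whence `(Fφ, φ) = (Q Sφ, Sφ)`. Coercivity of `Q` and Cauchy–Schwarz give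
the lower bound. For the upper bound, `Q` is a contraction and, coefficientwise,
`‖Sφ‖² = ∑ |λⱼ| |φⱼ|² ≤ ‖S‖ ∑ |λⱼ|^{1/2} |φⱼ|² = ‖S‖ (Sφ, φ)`. -/

open scoped InnerProductSpace

namespace HilbertBasis

variable {ι 𝕜 H : Type*} [RCLike 𝕜] [NormedAddCommGroup H] [InnerProductSpace 𝕜 H]
  (ψ : HilbertBasis ι 𝕜 H)

lemma tsum_smul_inner_smul_self (t : ι → 𝕜) (i : ι) :
    ∑' j, t j • (⟪ψ j, ψ i⟫_𝕜 • ψ j) = t i • ψ i := by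
  classical
  simp [orthonormal_iff_ite.mp ψ.orthonormal]

lemma ext_continuousLinearMap {E : Type*} [NormedAddCommGroup E] [NormedSpace 𝕜 E]
    {T U : H →L[𝕜] E} (h : ∀ i, T (ψ i) = U (ψ i)) : T = U :=
  ContinuousLinearMap.ext_on
    (Submodule.dense_iff_topologicalClosure_eq_top.mpr ψ.dense_span)
    (by rintro _ ⟨i, rfl⟩; exact h i)

lemma hasSum_norm_sq_inner (x : H) : HasSum (fun i => ‖⟪ψ i, x⟫_𝕜‖ ^ 2) (‖x‖ ^ 2) := by
  have h := (ψ.hasSum_inner_mul_inner x x).mapL RCLike.reCLM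
  rw [RCLike.reCLM_apply, inner_self_eq_norm_sq] at h
  refine h.congr_fun fun i => ?_
  rw [← inner_conj_symm x, RCLike.conj_mul, ← RCLike.ofReal_pow, RCLike.ofReal_re]

variable {ψ} {T : H →L[𝕜] H}

lemma inner_apply_of_apply_eq_smul {t : ι → 𝕜} (hT : ∀ j, T (ψ j) = t j • ψ j) (g : H) (i : ι) :
    ⟪ψ i, T g⟫_𝕜 = t i * ⟪ψ i, g⟫_𝕜 := by
  classical
  have h := ((ψ.hasSum_repr g).mapL ((innerSL 𝕜 (ψ i)).comp T)).tsum_eq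
  simp only [ψ.repr_apply_apply, map_smul, ContinuousLinearMap.comp_apply, hT, coe_innerSL_apply,
    orthonormal_iff_ite.mp ψ.orthonormal, smul_eq_mul, mul_ite, mul_one, mul_zero,
    tsum_ite_eq'] at h
  rw [← h, mul_comm]

lemma norm_le_opNorm_of_apply_eq_smul {t : ι → 𝕜} (hT : ∀ j, T (ψ j) = t j • ψ j) (i : ι) :
    ‖t i‖ ≤ ‖T‖ := by
  simpa [hT, norm_smul, ψ.orthonormal.norm_eq_one] using T.le_opNorm (ψ i)

lemma isSymmetric_of_apply_eq_ofReal_smul {r : ι → ℝ} (hT : ∀ j, T (ψ j) = (r j : 𝕜) • ψ j) :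
    (T : H →ₗ[𝕜] H).IsSymmetric := by
  intro x y
  rw [← ψ.tsum_inner_mul_inner, ← ψ.tsum_inner_mul_inner]
  congr 1 with i
  simp only [ContinuousLinearMap.coe_coe]
  rw [← inner_conj_symm, inner_apply_of_apply_eq_smul hT, inner_apply_of_apply_eq_smul hT,
    map_mul, RCLike.conj_ofReal, inner_conj_symm]
  ring

lemma norm_apply_sq_le_opNorm_mul_re_inner {r : ι → ℝ} (hr : ∀ j, 0 ≤ r j)
    (hT : ∀ j, T (ψ j) = (r j : 𝕜) • ψ j) (g : H) :
    ‖T g‖ ^ 2 ≤ ‖T‖ * RCLike.re ⟪T g, g⟫_𝕜 := by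
  have hnorm : HasSum (fun i => r i ^ 2 * ‖⟪ψ i, g⟫_𝕜‖ ^ 2) (‖T g‖ ^ 2) := by
    simpa [inner_apply_of_apply_eq_smul hT, mul_pow, abs_of_nonneg (hr _)]
      using ψ.hasSum_norm_sq_inner (T g)
  have hre : HasSum (fun i => r i * ‖⟪ψ i, g⟫_𝕜‖ ^ 2) (RCLike.re ⟪T g, g⟫_𝕜) := by
    have h := (ψ.hasSum_inner_mul_inner (T g) g).mapL RCLike.reCLM
    rw [RCLike.reCLM_apply] at h
    refine h.congr_fun fun i => ?_
    rw [← inner_conj_symm (T g), inner_apply_of_apply_eq_smul hT, map_mul (starRingEnd 𝕜),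
      RCLike.conj_ofReal, mul_assoc, RCLike.conj_mul, ← RCLike.ofReal_pow, ← RCLike.ofReal_mul,
      RCLike.ofReal_re]
  refine hasSum_le (fun i => ?_) hnorm (hre.mul_left ‖T‖)
  have hrT : r i ≤ ‖T‖ := by
    simpa [abs_of_nonneg (hr i)] using norm_le_opNorm_of_apply_eq_smul hT i
  rw [sq, mul_assoc]
  exact mul_le_mul_of_nonneg_right hrT (mul_nonneg (hr i) (sq_nonneg _))

end HilbertBasis

theorem equivalence_of_indicators_general
    {H : Type*} [NormedAddCommGroup H] [InnerProductSpace ℂ H]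
    (ψ : HilbertBasis ℕ ℂ H) (lam : ℕ → ℂ) (hlam : ∀ j, lam j ≠ 0)
    (F S Q : H →L[ℂ] H)
    (hF : ∀ g : H, F g = ∑' j : ℕ, lam j • (⟪ψ j, g⟫ • ψ j))
    (hS : ∀ g : H, S g = ∑' j : ℕ, ((Real.sqrt ‖lam j‖ : ℂ)) • (⟪ψ j, g⟫ • ψ j))
    (hQ : ∀ g : H, Q g = ∑' j : ℕ, (lam j / (‖lam j‖ : ℂ)) • (⟪ψ j, g⟫ • ψ j))
    (hQcontr : ∀ g : H, ‖Q g‖ ≤ ‖g‖)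
    (μ : ℝ) (hμ : 0 < μ) (hcoer : ∀ g : H, μ * ‖g‖ ^ 2 ≤ ‖⟪Q g, g⟫‖)
    (φ : H) (c : ℝ) (hc : 0 < c) (hφ : ‖φ‖ ^ 2 = c) :
    ∃ c₁ c₂ : ℝ, 0 < c₁ ∧ 0 < c₂ ∧ c₁ = μ / c ∧ c₂ = ‖S‖ ∧
      c₁ * ‖⟪S φ, φ⟫‖ ^ 2 ≤ ‖⟪F φ, φ⟫‖ ∧
      ‖⟪F φ, φ⟫‖ ≤ c₂ * (⟪S φ, φ⟫).re := by
  have hFψ (j : ℕ) := (hF (ψ j)).trans (ψ.tsum_smul_inner_smul_self _ j)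
  have hSψ (j : ℕ) := (hS (ψ j)).trans (ψ.tsum_smul_inner_smul_self _ j)
  have hQψ (j : ℕ) := (hQ (ψ j)).trans (ψ.tsum_smul_inner_smul_self _ j)
  have hFSQS : F = S ∘L Q ∘L S := ψ.ext_continuousLinearMap fun j => by
    have hnorm : (‖lam j‖ : ℂ) ≠ 0 := by exact_mod_cast norm_ne_zero_iff.mpr (hlam j)
    have hsqrt : (Real.sqrt ‖lam j‖ : ℂ) * Real.sqrt ‖lam j‖ = ‖lam j‖ := by
      exact_mod_cast Real.mul_self_sqrt (norm_nonneg (lam j))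
    simp only [ContinuousLinearMap.comp_apply, hFψ, hSψ, hQψ, map_smul, smul_smul]
    congr 1
    rw [mul_right_comm, hsqrt, mul_div_cancel₀ _ hnorm]
  have hkey : ⟪F φ, φ⟫ = ⟪Q (S φ), S φ⟫ := by
    rw [hFSQS]
    exact HilbertBasis.isSymmetric_of_apply_eq_ofReal_smul hSψ _ _
  have hSpos : 0 < ‖S‖ := calc
    0 < Real.sqrt ‖lam 0‖ := Real.sqrt_pos.mpr (norm_pos_iff.mpr (hlam 0))
    _ ≤ ‖S‖ := by
      simpa [abs_of_nonneg (Real.sqrt_nonneg _)]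
        using HilbertBasis.norm_le_opNorm_of_apply_eq_smul hSψ 0
  refine ⟨μ / c, ‖S‖, div_pos hμ hc, hSpos, rfl, rfl, ?_, ?_⟩
  · calc μ / c * ‖⟪S φ, φ⟫‖ ^ 2 ≤ μ / c * (‖S φ‖ ^ 2 * c) := by
          rw [← hφ, ← mul_pow]
          gcongr
          exact norm_inner_le_norm _ _
      _ = μ * ‖S φ‖ ^ 2 := by field_simp
      _ ≤ ‖⟪F φ, φ⟫‖ := hkey ▸ hcoer (S φ)
  · calc ‖⟪F φ, φ⟫‖ = ‖⟪Q (S φ), S φ⟫‖ := by rw [hkey]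
      _ ≤ ‖Q (S φ)‖ * ‖S φ‖ := norm_inner_le_norm _ _
      _ ≤ ‖S φ‖ ^ 2 := by rw [sq]; gcongr; exact hQcontr _
      _ ≤ ‖S‖ * (⟪S φ, φ⟫).re :=
          HilbertBasis.norm_apply_sq_le_opNorm_mul_re_inner (fun _ => Real.sqrt_nonneg _) hSψ φ

/-- Equivalence of the DSM and FDSM indicators: there exist `c₁ = μ/c > 0` and
`c₂ = ‖|F|^{1/2}‖ > 0` with
`c₁ |(|F|^{1/2} φ, φ)|² ≤ |(F φ, φ)| ≤ c₂ (|F|^{1/2} φ, φ)`. -/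
theorem equivalence_of_indicators
    {H : Type*} [NormedAddCommGroup H] [InnerProductSpace ℂ H] [CompleteSpace H]
    (ψ : HilbertBasis ℕ ℂ H) (lam : ℕ → ℂ) (hlam : ∀ j, lam j ≠ 0)
    (F S Q : H →L[ℂ] H)
    (hFc : IsCompactOperator F) (hFinj : Function.Injective F)
    (hF : ∀ g : H, F g = ∑' j : ℕ, lam j • (⟪ψ j, g⟫ • ψ j))
    (hS : ∀ g : H, S g = ∑' j : ℕ, ((Real.sqrt ‖lam j‖ : ℂ)) • (⟪ψ j, g⟫ • ψ j))
    (hQ : ∀ g : H, Q g = ∑' j : ℕ, (lam j / (‖lam j‖ : ℂ)) • (⟪ψ j, g⟫ • ψ j))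
    (hQcontr : ∀ g : H, ‖Q g‖ ≤ ‖g‖)
    (μ : ℝ) (hμ : 0 < μ) (hcoer : ∀ g : H, μ * ‖g‖ ^ 2 ≤ ‖⟪Q g, g⟫‖)
    (φ : H) (c : ℝ) (hc : 0 < c) (hφ : ‖φ‖ ^ 2 = c) :
    ∃ c₁ c₂ : ℝ, 0 < c₁ ∧ 0 < c₂ ∧ c₁ = μ / c ∧ c₂ = ‖S‖ ∧
      c₁ * ‖⟪S φ, φ⟫‖ ^ 2 ≤ ‖⟪F φ, φ⟫‖ ∧
      ‖⟪F φ, φ⟫‖ ≤ c₂ * (⟪S φ, φ⟫).re :=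
  equivalence_of_indicators_general ψ lam hlam F S Q hF hS hQ hQcontr μ hμ hcoer φ c hc hφ
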